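/- arXiv:1309.0835 — 7 statements merged into one kernel-verified Lean document; each statement's English description precedes it below -/
import Mathlib

section
/- Let X be a metric space, I : X → [0,∞] a good rate function, F : X → Y continuous, and J(y) = inf { I(x) : F(x) = y }. Then for every α ≥ 0, the level set {y ∈ Y : J(y) ≤ α} equals the image F({x ∈ X : I(x) ≤ α}). In particular, if J(y) < ∞ then the infimum defining J(y) is attained. -/
/-! A fibre `F ⁻¹' {y}` is closed, so its intersection with a sublevel set `{I ≤ I x₀}`
through one of its points is compact; there the lower semicontinuous `I` attains its
minimum, which is the infimum of `I` over the whole fibre. -/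

open scoped ENNReal NNReal

theorem LowerSemicontinuous.exists_eq_biInf_of_isClosed {X : Type*} [TopologicalSpace X]
    {I : X → ℝ≥0∞} (hI : LowerSemicontinuous I)
    (hcomp : ∀ α : ℝ≥0, IsCompact {x : X | I x ≤ (α : ℝ≥0∞)})
    {s : Set X} (hs : IsClosed s) (hfin : ⨅ x ∈ s, I x < ∞) :
    ∃ x ∈ s, I x = ⨅ x ∈ s, I x := by
  obtain ⟨x₀, hx₀s, hx₀⟩ : ∃ x ∈ s, I x < ∞ := by
    simpa only [iInf_lt_iff, exists_prop] using hfin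
  have hK : IsCompact (s ∩ {x | I x ≤ I x₀}) := by
    have := hcomp (I x₀).toNNReal
    rw [ENNReal.coe_toNNReal hx₀.ne] at this
    exact this.inter_left hs
  obtain ⟨a, ⟨has, hax⟩, hmin⟩ :=
    (hI.lowerSemicontinuousOn _).exists_isMinOn (s := s ∩ {x | I x ≤ I x₀})
      ⟨x₀, hx₀s, le_refl (I x₀)⟩ hK
  refine ⟨a, has, le_antisymm (le_iInf₂ fun x hx => ?_) (iInf₂_le a has)⟩
  rcases le_total (I x) (I x₀) with h | h
  · exact hmin ⟨hx, h⟩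
  · exact hax.trans h

/-- For a good rate function `I` on `X`, a continuous `F : X → Y` and
`J y = inf {I x : F x = y}`, each level set of `J` is the image under `F`
of the corresponding level set of `I`; in particular the infimum defining a
finite value `J y` is attained. -/
theorem level_sets_of_contracted_rate_function {X Y : Type*}
    [MetricSpace X] [MetricSpace Y]
    (I : X → ℝ≥0∞) (hIlsc : LowerSemicontinuous I)
    (hIcomp : ∀ α : ℝ≥0, IsCompact {x : X | I x ≤ (α : ℝ≥0∞)})
    (F : X → Y) (hF : Continuous F) :
    (∀ α : ℝ≥0, {y : Y | (⨅ x ∈ {x : X | F x = y}, I x) ≤ (α : ℝ≥0∞)}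
        = F '' {x : X | I x ≤ (α : ℝ≥0∞)}) ∧
      ∀ y : Y, (⨅ x ∈ {x : X | F x = y}, I x) < ∞ →
        ∃ x : X, F x = y ∧ I x = ⨅ x ∈ {x : X | F x = y}, I x := by
  have attained : ∀ y : Y, (⨅ x ∈ {x : X | F x = y}, I x) < ∞ →
      ∃ x : X, F x = y ∧ I x = ⨅ x ∈ {x : X | F x = y}, I x := fun y hy =>
    hIlsc.exists_eq_biInf_of_isClosed hIcomp (isClosed_eq hF continuous_const) hy
  refine ⟨fun α => Set.ext fun y => ⟨fun hy => ?_, ?_⟩, attained⟩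
  · obtain ⟨x, hxy, hx⟩ := attained y (hy.trans_lt ENNReal.coe_lt_top)
    exact ⟨x, hx.le.trans hy, hxy⟩
  · rintro ⟨x, hx : I x ≤ α, rfl⟩
    show (⨅ x' ∈ {x' | F x' = F x}, I x') ≤ α
    exact iInf₂_le_of_le x rfl hx
end

section
/- Let (W, d) be a metric space and Cap a monotone, finitely subadditive set function on subsets of W. Suppose T^{ε,m}, T^ε : W → X are maps into a metric space (X,ρ), each family {T^{ε,m}} satisfies the Cap-LDP upper bound with good rate function I_m, the families {T^{ε,m}} are exponentially good approximations of {T^ε} under Cap, and I is a good rate function satisfying inf_{x∈C} I(x) ≤ limsup_{m→∞} inf_{x∈C_λ} I_m(x) for all closed C and its λ-fattenings C_λ. Then for every closed C ⊆ X: limsup_{ε→0} ε² log Cap{w : T^ε(w) ∈ C} ≤ −(1/q) inf_{x∈C} I(x). -/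
/-!
If `Te ε ∈ C`, then either `T ε m` lies in the closed `1/2`-thickening of `C` or it is
`1/2`-far from `Te ε`. By subadditivity of `Cap` and the principle of the largest term, the decay
rate of `{Te ε ∈ C}` is at most the larger of the two corresponding rates. The first is bounded by
the LDP upper bound for `T · m` on the thickening, the second tends to `-∞` as `m → ∞`, so taking
the limsup in `m` and comparing rate functions on the thickening gives the bound with `I`.
-/

open Filter Metric Set Topology
open scoped ENNReal NNReal

section LargestTerm

variable {α : Type*} {l : Filter α} {s : α → ℝ}

lemma mul_log_add_le_mul_log_two_add_max (hs : 0 ≤ s) (a b : α → ℝ≥0∞) (x : α) :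
    (s x : EReal) * ENNReal.log (a x + b x) ≤
      (s x : EReal) * (Real.log 2 : EReal) +
        max ((s x : EReal) * ENNReal.log (a x)) ((s x : EReal) * ENNReal.log (b x)) := by
  have hsx : (0 : EReal) ≤ s x := EReal.coe_nonneg.2 (hs x)
  have hsum : a x + b x ≤ 2 * max (a x) (b x) := by
    rw [two_mul]
    exact add_le_add (le_max_left _ _) (le_max_right _ _)
  have hlog2 : ENNReal.log 2 = (Real.log 2 : EReal) := by
    simpa using ENNReal.log_ofReal_of_pos (x := 2) two_pos
  calc (s x : EReal) * ENNReal.log (a x + b x)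
      ≤ (s x : EReal) * (ENNReal.log 2 + ENNReal.log (max (a x) (b x))) := by
        rw [← ENNReal.log_mul_add]
        exact mul_le_mul_of_nonneg_left (ENNReal.log_monotone hsum) hsx
    _ = _ := by
        rw [EReal.left_distrib_of_nonneg_of_ne_top hsx (EReal.coe_ne_top _), hlog2,
          ENNReal.log_monotone.map_max, (monotone_mul_left_of_nonneg hsx).map_max]

/-- The principle of the largest term. -/
theorem limsup_mul_log_add_le (hs : 0 ≤ s) (hs0 : Tendsto s l (𝓝 0)) (a b : α → ℝ≥0∞) :
    limsup (fun x => (s x : EReal) * ENNReal.log (a x + b x)) l ≤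
      max (limsup (fun x => (s x : EReal) * ENNReal.log (a x)) l)
        (limsup (fun x => (s x : EReal) * ENNReal.log (b x)) l) := by
  rcases l.eq_or_neBot with rfl | _
  · simp
  have hlog2 : limsup (fun x => (s x : EReal) * (Real.log 2 : EReal)) l = 0 := by
    simpa using ((EReal.tendsto_coe.2 (hs0.mul_const (Real.log 2))).limsup_eq)
  calc limsup (fun x => (s x : EReal) * ENNReal.log (a x + b x)) l
      ≤ limsup ((fun x => (s x : EReal) * (Real.log 2 : EReal)) + fun x =>
          max ((s x : EReal) * ENNReal.log (a x)) ((s x : EReal) * ENNReal.log (b x))) l :=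
        limsup_le_limsup (Eventually.of_forall (mul_log_add_le_mul_log_two_add_max hs a b))
    _ ≤ 0 + limsup (fun x =>
          max ((s x : EReal) * ENNReal.log (a x)) ((s x : EReal) * ENNReal.log (b x))) l := by
        rw [← hlog2]
        exact EReal.limsup_add_le (.inl (by simp [hlog2])) (.inl (by simp [hlog2]))
    _ = _ := by rw [zero_add, limsup_max]

end LargestTerm

section Capacity

variable {W : Type*} (Cap : Set W → ℝ≥0∞)

noncomputable def capRate (A : ℝ → Set W) : EReal :=
  limsup (fun ε : ℝ => ((ε ^ 2 : ℝ) : EReal) * ENNReal.log (Cap (A ε))) (𝓝[>] 0)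

variable {Cap}

lemma capRate_mono (hmono : ∀ A B : Set W, A ⊆ B → Cap A ≤ Cap B) {A B : ℝ → Set W}
    (hAB : ∀ ε, A ε ⊆ B ε) : capRate Cap A ≤ capRate Cap B :=
  limsup_le_limsup (Eventually.of_forall fun ε =>
    mul_le_mul_of_nonneg_left (ENNReal.log_monotone (hmono _ _ (hAB ε)))
      (EReal.coe_nonneg.2 (sq_nonneg ε)))

lemma capRate_union_le (hsub : ∀ A B : Set W, Cap (A ∪ B) ≤ Cap A + Cap B) (A B : ℝ → Set W) :
    capRate Cap (fun ε => A ε ∪ B ε) ≤ max (capRate Cap A) (capRate Cap B) := by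
  have hsq : Tendsto (fun ε : ℝ => ε ^ 2) (𝓝[>] 0) (𝓝 0) :=
    ((continuous_pow 2).tendsto' 0 0 (by simp)).mono_left nhdsWithin_le_nhds
  refine le_trans (limsup_le_limsup (Eventually.of_forall fun ε => ?_))
    (limsup_mul_log_add_le (fun ε => sq_nonneg ε) hsq (fun ε => Cap (A ε)) (fun ε => Cap (B ε)))
  exact mul_le_mul_of_nonneg_left (ENNReal.log_monotone (hsub _ _))
    (EReal.coe_nonneg.2 (sq_nonneg ε))

variable {X : Type*} [PseudoMetricSpace X]

lemma setOf_mem_subset_cthickening_union (f g : W → X) (δ : ℝ) (C : Set X) :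
    {w | g w ∈ C} ⊆ {w | f w ∈ cthickening δ C} ∪ {w | δ < dist (f w) (g w)} := by
  intro w hw
  by_cases hd : δ < dist (f w) (g w)
  · exact Or.inr hd
  · exact Or.inl (mem_cthickening_of_dist_le _ _ _ _ hw (not_lt.1 hd))

lemma capRate_le_max_cthickening (hmono : ∀ A B : Set W, A ⊆ B → Cap A ≤ Cap B)
    (hsub : ∀ A B : Set W, Cap (A ∪ B) ≤ Cap A + Cap B) (f g : ℝ → W → X) (δ : ℝ) (C : Set X) :
    capRate Cap (fun ε => {w | g ε w ∈ C}) ≤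
      max (capRate Cap fun ε => {w | f ε w ∈ cthickening δ C})
        (capRate Cap fun ε => {w | δ < dist (f ε w) (g ε w)}) :=
  (capRate_mono hmono fun ε => setOf_mem_subset_cthickening_union (f ε) (g ε) δ C).trans
    (capRate_union_le hsub _ _)

end Capacity

namespace EReal

lemma antitone_neg_mul_coe_ennreal {c : ℝ} (hc : 0 ≤ c) :
    Antitone fun x : ℝ≥0∞ => -((c : EReal) * x) := fun _ _ hxy =>
  EReal.neg_le_neg_iff.2 (mul_le_mul_of_nonneg_left (EReal.coe_ennreal_le_coe_ennreal_iff.2 hxy)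
    (EReal.coe_nonneg.2 hc))

lemma continuous_neg_mul_coe_ennreal {c : ℝ} (hc : 0 < c) :
    Continuous fun x : ℝ≥0∞ => -((c : EReal) * x) := by
  refine continuous_neg.comp (continuous_iff_continuousAt.2 fun x => ?_)
  refine ContinuousAt.comp (f := fun x : ℝ≥0∞ => ((c : EReal), (x : EReal)))
    (EReal.continuousAt_mul ?_ ?_ ?_ ?_)
    (continuousAt_const.prodMk continuous_coe_ennreal_ereal.continuousAt) <;> simp [hc.ne']

theorem le_neg_mul_of_eventually_le_max {ι : Type*} {l : Filter ι} [l.NeBot] {L : EReal} {c : ℝ}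
    (hc : 0 < c) {J : ι → ℝ≥0∞} {E : ι → EReal} {κ : ℝ≥0∞}
    (hL : ∀ᶠ i in l, L ≤ max (-((c : EReal) * J i)) (E i)) (hE : Tendsto E l (𝓝 ⊥))
    (hκ : κ ≤ limsup J l) :
    L ≤ -((c : EReal) * κ) := by
  rcases eq_bot_or_bot_lt L with rfl | hL_bot
  · exact bot_le
  have hLJ : ∀ᶠ i in l, L ≤ -((c : EReal) * J i) := by
    filter_upwards [hL, hE (Iio_mem_nhds hL_bot)] with i hi hEi
    exact (le_max_iff.1 hi).resolve_right (not_le.2 hEi)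
  calc L ≤ liminf (fun i => -((c : EReal) * J i)) l := le_liminf_of_le (by isBoundedDefault) hLJ
    _ = -((c : EReal) * limsup J l) :=
      ((antitone_neg_mul_coe_ennreal hc.le).map_limsup_of_continuousAt J
        (continuous_neg_mul_coe_ennreal hc).continuousAt).symm
    _ ≤ -((c : EReal) * κ) := antitone_neg_mul_coe_ennreal hc.le hκ

end EReal

lemma Metric.cthickening_subset_setOf_exists_dist_le {X : Type*} [PseudoMetricSpace X]
    {δ r : ℝ} (hr : 0 < r) (hδr : δ < r) (C : Set X) :
    cthickening δ C ⊆ {x | ∃ y ∈ C, dist x y ≤ r} := fun _ hx =>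
  let ⟨y, hy, hxy⟩ := mem_thickening_iff.1 (cthickening_subset_thickening' hr hδr C hx)
  ⟨y, hy, hxy.le⟩

theorem capacity_ldp_upper_via_exponential_approximation_general
    {W X : Type*} [MetricSpace X]
    (Cap : Set W → ℝ≥0∞)
    (hmono : ∀ A B : Set W, A ⊆ B → Cap A ≤ Cap B)
    (hsub : ∀ A B : Set W, Cap (A ∪ B) ≤ Cap A + Cap B)
    (q : ℝ) (hq : 1 < q)
    (T : ℝ → ℕ → W → X) (Te : ℝ → W → X)
    (Im : ℕ → X → ℝ≥0∞) (I : X → ℝ≥0∞)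
    (hupper : ∀ m : ℕ, ∀ C : Set X, IsClosed C →
      limsup (fun ε : ℝ => ((ε ^ 2 : ℝ) : EReal) *
          ENNReal.log (Cap {w | T ε m w ∈ C})) (𝓝[>] 0)
        ≤ -(((1 / q : ℝ) : EReal) * ((⨅ x ∈ C, Im m x : ℝ≥0∞) : EReal)))
    (happrox : ∀ lam : ℝ, 0 < lam →
      Tendsto (fun m : ℕ => limsup (fun ε : ℝ => ((ε ^ 2 : ℝ) : EReal) *
          ENNReal.log (Cap {w | lam < dist (T ε m w) (Te ε w)})) (𝓝[>] 0))
        atTop (𝓝 (⊥ : EReal)))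
    (hrate : ∀ C : Set X, IsClosed C → ∀ lam : ℝ, 0 < lam →
      (⨅ x ∈ C, I x)
        ≤ limsup (fun m : ℕ => ⨅ x ∈ {x : X | ∃ y ∈ C, dist x y ≤ lam}, Im m x) atTop) :
    ∀ C : Set X, IsClosed C →
      limsup (fun ε : ℝ => ((ε ^ 2 : ℝ) : EReal) *
          ENNReal.log (Cap {w | Te ε w ∈ C})) (𝓝[>] 0)
        ≤ -(((1 / q : ℝ) : EReal) * ((⨅ x ∈ C, I x : ℝ≥0∞) : EReal)) := by
  intro C hC
  have hc : (0 : ℝ) < 1 / q := one_div_pos.2 (one_pos.trans hq)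
  have hTe (m : ℕ) : capRate Cap (fun ε => {w | Te ε w ∈ C}) ≤
      max (-(((1 / q : ℝ) : EReal) * ((⨅ x ∈ {x : X | ∃ y ∈ C, dist x y ≤ 1}, Im m x : ℝ≥0∞))))
        (capRate Cap fun ε => {w | 1 / 2 < dist (T ε m w) (Te ε w)}) :=
    (capRate_le_max_cthickening hmono hsub (fun ε => T ε m) Te (1 / 2) C).trans <|
      max_le_max_right _ <| (hupper m _ isClosed_cthickening).trans <|
        EReal.antitone_neg_mul_coe_ennreal hc.le <| biInf_mono fun x hx =>
          cthickening_subset_setOf_exists_dist_le one_pos one_half_lt_one C hx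
  exact EReal.le_neg_mul_of_eventually_le_max hc (Eventually.of_forall hTe)
    (happrox (1 / 2) one_half_pos) (hrate C hC 1 one_pos)

/-- Upper bound for a Cap-LDP obtained via exponentially good approximations:
if each family `T^{ε,m}` satisfies the `Cap`-LDP upper bound with good rate
function `Im m`, the `T^{ε,m}` are exponentially good approximations of `Tε`
under `Cap`, and the good rate function `I` satisfies
`inf_C I ≤ limsup_m inf_{C_λ} Im m` for all closed `C` and `λ > 0`, then the
`Cap`-LDP upper bound holds for `Tε` with rate function `I`. -/
theorem capacity_ldp_upper_via_exponential_approximation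
    {W X : Type*} [MetricSpace X]
    (Cap : Set W → ℝ≥0∞)
    (hmono : ∀ A B : Set W, A ⊆ B → Cap A ≤ Cap B)
    (hsub : ∀ A B : Set W, Cap (A ∪ B) ≤ Cap A + Cap B)
    (q : ℝ) (hq : 1 < q)
    (T : ℝ → ℕ → W → X) (Te : ℝ → W → X)
    (Im : ℕ → X → ℝ≥0∞) (I : X → ℝ≥0∞)
    (hImlsc : ∀ m, LowerSemicontinuous (Im m))
    (hImcomp : ∀ m, ∀ α : ℝ≥0, IsCompact {x : X | Im m x ≤ (α : ℝ≥0∞)})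
    (hIlsc : LowerSemicontinuous I)
    (hIcomp : ∀ α : ℝ≥0, IsCompact {x : X | I x ≤ (α : ℝ≥0∞)})
    (hupper : ∀ m : ℕ, ∀ C : Set X, IsClosed C →
      limsup (fun ε : ℝ => ((ε ^ 2 : ℝ) : EReal) *
          ENNReal.log (Cap {w | T ε m w ∈ C})) (𝓝[>] 0)
        ≤ -(((1 / q : ℝ) : EReal) * ((⨅ x ∈ C, Im m x : ℝ≥0∞) : EReal)))
    (happrox : ∀ lam : ℝ, 0 < lam →
      Tendsto (fun m : ℕ => limsup (fun ε : ℝ => ((ε ^ 2 : ℝ) : EReal) *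
          ENNReal.log (Cap {w | lam < dist (T ε m w) (Te ε w)})) (𝓝[>] 0))
        atTop (𝓝 (⊥ : EReal)))
    (hrate : ∀ C : Set X, IsClosed C → ∀ lam : ℝ, 0 < lam →
      (⨅ x ∈ C, I x)
        ≤ limsup (fun m : ℕ => ⨅ x ∈ {x : X | ∃ y ∈ C, dist x y ≤ lam}, Im m x) atTop) :
    ∀ C : Set X, IsClosed C →
      limsup (fun ε : ℝ => ((ε ^ 2 : ℝ) : EReal) *
          ENNReal.log (Cap {w | Te ε w ∈ C})) (𝓝[>] 0)
        ≤ -(((1 / q : ℝ) : EReal) * ((⨅ x ∈ C, I x : ℝ≥0∞) : EReal)) :=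
  capacity_ldp_upper_via_exponential_approximation_general Cap hmono hsub q hq T Te Im I hupper
    happrox hrate
end

section
/- Let I : X → [0,∞] be a good rate function on a metric space X and C ⊆ X a closed set. Then lim_{λ→0⁺} inf_{x ∈ C_λ} I(x) = inf_{x ∈ C} I(x), where C_λ = {x : dist(x, C) ≤ λ}. -/
open Filter Metric Set Topology
open scoped ENNReal NNReal

/-!
A value `c` below `inf_C I` has a compact sublevel set `{I ≤ c}` disjoint from the closed set `C`,
hence at positive distance from it: for small `λ` the fattening `C_λ` misses `{I ≤ c}`, so
`inf_{C_λ} I ≥ c`. Since `C ⊆ C_λ`, also `inf_{C_λ} I ≤ inf_C I`.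
-/

theorem exists_pos_forall_mem_cthickening_lt_of_isCompact_sublevel {X β : Type*}
    [PseudoMetricSpace X] [LinearOrder β] {I : X → β} {C : Set X} (hC : IsClosed C) {c : β}
    (hK : IsCompact {x | I x ≤ c}) (hcC : ∀ x ∈ C, c < I x) :
    ∃ δ > 0, ∀ x ∈ cthickening δ C, c < I x := by
  have hdisj : Disjoint {x | I x ≤ c} C :=
    disjoint_left.2 fun x hxK hxC => (hcC x hxC).not_ge hxK
  obtain ⟨δ, hδ, hδdisj⟩ := hdisj.exists_cthickenings hK hC
  refine ⟨δ, hδ, fun x hx => not_le.1 fun hxK => ?_⟩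
  exact disjoint_left.1 hδdisj (self_subset_cthickening _ hxK) hx

theorem eventually_le_iInf_fattening_of_lt_iInf {X : Type*} [PseudoMetricSpace X]
    {I : X → ℝ≥0∞} (hIcomp : ∀ α : ℝ≥0, IsCompact {x | I x ≤ (α : ℝ≥0∞)})
    {C : Set X} (hC : IsClosed C) {c : ℝ≥0∞} (hc : c < ⨅ x ∈ C, I x) :
    ∀ᶠ lam in 𝓝[>] (0 : ℝ), c ≤ ⨅ x ∈ {x : X | ∃ y ∈ C, dist x y ≤ lam}, I x := by
  lift c to ℝ≥0 using (hc.trans_le le_top).ne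
  have hcC : ∀ x ∈ C, (c : ℝ≥0∞) < I x := fun x hx => hc.trans_le (iInf₂_le x hx)
  obtain ⟨δ, hδ, hδC⟩ :=
    exists_pos_forall_mem_cthickening_lt_of_isCompact_sublevel hC (hIcomp c) hcC
  filter_upwards [Ioc_mem_nhdsGT hδ] with lam hlam
  refine le_iInf₂ fun x ⟨y, hy, hxy⟩ => (hδC x ?_).le
  exact cthickening_mono hlam.2 C (mem_cthickening_of_dist_le x y lam C hy hxy)

theorem iInf_fattening_le_iInf {X : Type*} [PseudoMetricSpace X] (I : X → ℝ≥0∞) (C : Set X)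
    {lam : ℝ} (hlam : 0 ≤ lam) :
    ⨅ x ∈ {x : X | ∃ y ∈ C, dist x y ≤ lam}, I x ≤ ⨅ x ∈ C, I x :=
  iInf_le_iInf_of_subset fun x hx => ⟨x, hx, by rwa [dist_self]⟩

theorem good_rate_function_inf_fattening_tendsto_general {X : Type*} [MetricSpace X]
    (I : X → ℝ≥0∞)
    (hIcomp : ∀ α : ℝ≥0, IsCompact {x : X | I x ≤ (α : ℝ≥0∞)})
    (C : Set X) (hC : IsClosed C) :
    Tendsto (fun lam : ℝ => ⨅ x ∈ {x : X | ∃ y ∈ C, dist x y ≤ lam}, I x)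
      (𝓝[>] 0) (𝓝 (⨅ x ∈ C, I x)) := by
  refine tendsto_order.2 ⟨fun a ha => ?_, fun b hb => ?_⟩
  · obtain ⟨c, hac, hc⟩ := exists_between ha
    filter_upwards [eventually_le_iInf_fattening_of_lt_iInf hIcomp hC hc] with lam hlam
    exact hac.trans_le hlam
  · filter_upwards [self_mem_nhdsWithin] with lam hlam
    exact (iInf_fattening_le_iInf I C (le_of_lt hlam)).trans_lt hb

/-- For a good rate function `I` on a metric space and a closed set `C`,
`inf_{C_λ} I → inf_C I` as `λ → 0⁺`, where `C_λ = {x : dist(x,C) ≤ λ}`. -/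
theorem good_rate_function_inf_fattening_tendsto {X : Type*} [MetricSpace X]
    (I : X → ℝ≥0∞) (hIlsc : LowerSemicontinuous I)
    (hIcomp : ∀ α : ℝ≥0, IsCompact {x : X | I x ≤ (α : ℝ≥0∞)})
    (C : Set X) (hC : IsClosed C) :
    Tendsto (fun lam : ℝ => ⨅ x ∈ {x : X | ∃ y ∈ C, dist x y ≤ lam}, I x)
      (𝓝[>] 0) (𝓝 (⨅ x ∈ C, I x)) :=
  good_rate_function_inf_fattening_tendsto_general I hIcomp C hC
end

section
/- Let μ be the standard Gaussian measure on ℝ. For q > 1, N ∈ ℕ, b > 0, and ε > 0, define for each λ > 0 the function f(x) = exp(λεx − λb). Then f ≥ 1 on {x : εx > b}, and ∑_{i=0}^N (∫_ℝ |f^{(i)}(x)|^q μ(dx))^{1/q} = ∑_{i=0}^N (λε)^i exp((q/2)(λε)² − λb). Consequently, taking λ = b/(qε²), limsup_{ε→0} ε² log Cap_{q,N}{x : εx > b} ≤ −b²/(2q), where Cap_{q,N}(O) for open O is the infimum of the sum ∑_{i=0}^N ‖u^{(i)}‖_{L^q(μ)} over smooth u with u ≥ 1 on O and u ≥ 0 everywhere.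 -/
open Filter MeasureTheory ProbabilityTheory Topology
open scoped ENNReal NNReal

/-- The `(q,N)`-capacity of an open subset of the one-dimensional Gaussian
space, defined as the infimum of the Sobolev norms
`∑_{i=0}^N ‖u^{(i)}‖_{L^q(μ)}` over smooth `u ≥ 1` on `O`, `u ≥ 0` a.s. -/
noncomputable def gaussCap1 (q : ℝ) (N : ℕ) (O : Set ℝ) : ℝ≥0∞ :=
  ⨅ u ∈ {u : ℝ → ℝ | ContDiff ℝ (⊤ : ℕ∞) u ∧ (∀ x ∈ O, 1 ≤ u x) ∧
      (∀ᵐ x ∂(gaussianReal 0 1), 0 ≤ u x)},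
    ENNReal.ofReal (∑ i ∈ Finset.range (N + 1),
      (∫ x, |iteratedDeriv i u x| ^ q ∂(gaussianReal 0 1)) ^ (1 / q))

lemma gauss_exp_integral (t : ℝ) :
    ∫ x, Real.exp (t * x) ∂(gaussianReal 0 1) = Real.exp (t ^ 2 / 2) := by
  rw [gaussianReal_of_var_ne_zero 0 one_ne_zero]
  have hpdf : gaussianPDF 0 1 = fun x => ((gaussianPDFReal 0 1 x).toNNReal : ℝ≥0∞) := rfl
  rw [hpdf, integral_withDensity_eq_integral_smul
    ((measurable_gaussianPDFReal 0 1).real_toNNReal)]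
  have key : (fun x => (gaussianPDFReal 0 1 x).toNNReal • Real.exp (t * x))
      = fun x => Real.exp (t ^ 2 / 2) * gaussianPDFReal t 1 x := by
    funext x
    rw [NNReal.smul_def, Real.coe_toNNReal _ (gaussianPDFReal_nonneg 0 1 x)]
    simp only [gaussianPDFReal, NNReal.coe_one, mul_one, sub_zero]
    rw [smul_eq_mul, mul_assoc, ← Real.exp_add, mul_comm (Real.exp (t ^ 2 / 2)), mul_assoc,
      ← Real.exp_add]
    congr 1
    ring
  rw [key, integral_const_mul, integral_gaussianPDFReal_eq_one t one_ne_zero, mul_one]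

lemma iter_deriv_exp_affine (c d : ℝ) (i : ℕ) :
    iteratedDeriv i (fun y : ℝ => Real.exp (c * y - d))
      = fun y => c ^ i * Real.exp (c * y - d) := by
  induction i with
  | zero => simp
  | succ n ih =>
    rw [iteratedDeriv_succ, ih]
    funext y
    have h : HasDerivAt (fun y : ℝ => c ^ n * Real.exp (c * y - d))
        (c ^ n * (Real.exp (c * id y - d) * (c * 1))) y :=
      ((((hasDerivAt_id y).const_mul c).sub_const d).exp).const_mul _
    rw [h.deriv]
    simp only [id]
    ring

lemma term_integral (q c d : ℝ) (hq : 1 < q) (hc : 0 < c) (i : ℕ) :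
    (∫ x, |c ^ i * Real.exp (c * x - d)| ^ q ∂(gaussianReal 0 1)) ^ (1 / q)
      = c ^ i * Real.exp ((q / 2) * c ^ 2 - d) := by
  have hq0 : q ≠ 0 := by linarith
  have hfun : (fun x => |c ^ i * Real.exp (c * x - d)| ^ q)
      = fun x => ((c ^ i) ^ q / Real.exp (q * d)) * Real.exp ((q * c) * x) := by
    funext x
    rw [abs_of_pos (by positivity),
      Real.mul_rpow (by positivity) (Real.exp_pos _).le, ← Real.exp_mul]
    rw [mul_comm (c * x - d) q, mul_sub, Real.exp_sub]
    ring
  rw [hfun, integral_const_mul, gauss_exp_integral,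
    Real.mul_rpow (by positivity) (by positivity),
    Real.div_rpow (by positivity) (Real.exp_pos _).le,
    ← Real.exp_mul, ← Real.exp_mul, one_div,
    Real.rpow_rpow_inv (by positivity) hq0,
    div_mul_eq_mul_div, mul_div_assoc, ← Real.exp_sub]
  congr 1
  field_simp

/-- On the one-dimensional standard Gaussian space: for `λ > 0` the function
`f(x) = exp(λεx − λb)` dominates `1` on `{εx > b}`, its `(q,N)`-Sobolev norm
equals `∑_{i=0}^N (λε)^i exp((q/2)(λε)² − λb)`, and consequently
`limsup_{ε→0} ε² log Cap_{q,N}{x : εx > b} ≤ −b²/(2q)`. -/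
theorem one_dim_gaussian_capacity_tail_bound (q : ℝ) (N : ℕ) (b : ℝ)
    (hq : 1 < q) (hb : 0 < b) :
    (∀ ε : ℝ, 0 < ε → ∀ lam : ℝ, 0 < lam →
      (∀ x : ℝ, b < ε * x → 1 ≤ Real.exp (lam * ε * x - lam * b)) ∧
      (∑ i ∈ Finset.range (N + 1),
          (∫ x, |iteratedDeriv i (fun y : ℝ => Real.exp (lam * ε * y - lam * b)) x| ^ q
            ∂(gaussianReal 0 1)) ^ (1 / q)
        = ∑ i ∈ Finset.range (N + 1),
            (lam * ε) ^ i * Real.exp ((q / 2) * (lam * ε) ^ 2 - lam * b))) ∧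
    limsup (fun ε : ℝ => ((ε ^ 2 : ℝ) : EReal) *
        ENNReal.log (gaussCap1 q N {x : ℝ | b < ε * x})) (𝓝[>] 0)
      ≤ ((-(b ^ 2 / (2 * q)) : ℝ) : EReal) := by
  have hq0 : (0 : ℝ) < q := by linarith
  have partA : ∀ ε : ℝ, 0 < ε → ∀ lam : ℝ, 0 < lam →
      (∀ x : ℝ, b < ε * x → 1 ≤ Real.exp (lam * ε * x - lam * b)) ∧
      (∑ i ∈ Finset.range (N + 1),
          (∫ x, |iteratedDeriv i (fun y : ℝ => Real.exp (lam * ε * y - lam * b)) x| ^ q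
            ∂(gaussianReal 0 1)) ^ (1 / q)
        = ∑ i ∈ Finset.range (N + 1),
            (lam * ε) ^ i * Real.exp ((q / 2) * (lam * ε) ^ 2 - lam * b)) := by
    intro ε hε lam hlam
    constructor
    · intro x hx
      apply Real.one_le_exp
      have h : lam * ε * x - lam * b = lam * (ε * x - b) := by ring
      rw [h]
      exact mul_nonneg hlam.le (by linarith)
    · refine Finset.sum_congr rfl fun i _ => ?_
      simp only [iter_deriv_exp_affine (lam * ε) (lam * b) i]
      exact term_integral q (lam * ε) (lam * b) hq (by positivity) i
  refine ⟨partA, ?_⟩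
  -- the candidate function gives an upper bound on the capacity
  set S : ℝ → ℝ := fun ε => ∑ i ∈ Finset.range (N + 1),
    (b / (q * ε)) ^ i * Real.exp (-(b ^ 2 / (2 * q * ε ^ 2))) with hS_def
  have hSpos : ∀ ε : ℝ, 0 < ε → 0 < S ε := by
    intro ε hε
    refine Finset.sum_pos (fun i _ => by positivity) ⟨0, by simp⟩
  have key : ∀ ε : ℝ, 0 < ε →
      ((ε ^ 2 : ℝ) : EReal) * ENNReal.log (gaussCap1 q N {x : ℝ | b < ε * x})
        ≤ ((ε ^ 2 * Real.log (S ε) : ℝ) : EReal) := by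
    intro ε hε
    set lam : ℝ := b / (q * ε ^ 2) with hlam_def
    have hlam : 0 < lam := by positivity
    obtain ⟨h1, h2⟩ := partA ε hε lam hlam
    have hmem : (fun y : ℝ => Real.exp (lam * ε * y - lam * b)) ∈
        {u : ℝ → ℝ | ContDiff ℝ (⊤ : ℕ∞) u ∧ (∀ x ∈ {x : ℝ | b < ε * x}, 1 ≤ u x) ∧
          (∀ᵐ x ∂(gaussianReal 0 1), 0 ≤ u x)} := by
      refine ⟨?_, fun x hx => h1 x hx, ae_of_all _ fun x => (Real.exp_pos _).le⟩
      exact Real.contDiff_exp.comp (((contDiff_const.mul contDiff_id).sub contDiff_const))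
    have hcap : gaussCap1 q N {x : ℝ | b < ε * x} ≤ ENNReal.ofReal (S ε) := by
      refine le_trans (biInf_le _ hmem) ?_
      rw [h2]
      apply le_of_eq
      congr 1
      refine Finset.sum_congr rfl fun i _ => ?_
      have hc : lam * ε = b / (q * ε) := by
        rw [hlam_def]; field_simp
      have hexp : (q / 2) * (lam * ε) ^ 2 - lam * b = -(b ^ 2 / (2 * q * ε ^ 2)) := by
        rw [hlam_def]; field_simp; ring
      rw [hexp, hc]
    have hlog : ENNReal.log (gaussCap1 q N {x : ℝ | b < ε * x})
        ≤ ((Real.log (S ε) : ℝ) : EReal) := by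
      refine le_trans (ENNReal.log_monotone hcap) ?_
      rw [ENNReal.log_ofReal_of_pos (hSpos ε hε)]
    calc ((ε ^ 2 : ℝ) : EReal) * ENNReal.log (gaussCap1 q N {x : ℝ | b < ε * x})
        ≤ ((ε ^ 2 : ℝ) : EReal) * ((Real.log (S ε) : ℝ) : EReal) :=
          mul_le_mul_of_nonneg_left hlog (by exact_mod_cast sq_nonneg ε)
      _ = ((ε ^ 2 * Real.log (S ε) : ℝ) : EReal) := by rw [← EReal.coe_mul]
  -- the upper bound tends to the claimed limit
  have hT0 : Tendsto (fun ε : ℝ => ε ^ 2 * Real.log (∑ i ∈ Finset.range (N + 1),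
      (b / (q * ε)) ^ i)) (𝓝[>] 0) (𝓝 0) := by
    set C : ℝ := Real.log ((N : ℝ) + 1) + N * (Real.log b - Real.log q) with hC_def
    have hA : Tendsto (fun ε : ℝ => Real.log ε * ε ^ 2) (𝓝[>] 0) (𝓝 0) := by
      refine (tendsto_log_mul_rpow_nhdsGT_zero two_pos).congr' ?_
      filter_upwards [self_mem_nhdsWithin] with ε (hε : (0:ℝ) < ε)
      rw [show ((2:ℝ)) = ((2:ℕ) : ℝ) by norm_num, Real.rpow_natCast]
    have hsq : Tendsto (fun ε : ℝ => ε ^ 2) (𝓝[>] (0:ℝ)) (𝓝 0) := by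
      have h := ((continuous_pow 2).tendsto (0:ℝ)).mono_left
        (nhdsWithin_le_nhds (s := Set.Ioi (0:ℝ)))
      simpa using h
    have hU : Tendsto (fun ε : ℝ => ε ^ 2 * C - N * (Real.log ε * ε ^ 2)) (𝓝[>] 0)
        (𝓝 0) := by
      have := (hsq.mul_const C).sub (hA.const_mul (N : ℝ))
      simpa using this
    refine tendsto_of_tendsto_of_tendsto_of_le_of_le' tendsto_const_nhds hU ?_ ?_
    · filter_upwards [self_mem_nhdsWithin] with ε (hε : (0:ℝ) < ε)
      have hT1 : (1:ℝ) ≤ ∑ i ∈ Finset.range (N + 1), (b / (q * ε)) ^ i := by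
        have := Finset.single_le_sum (f := fun i => (b / (q * ε)) ^ i)
          (fun i _ => by positivity) (Finset.mem_range.mpr (Nat.succ_pos N))
        simpa using this
      exact mul_nonneg (sq_nonneg ε) (Real.log_nonneg hT1)
    · filter_upwards [Ioo_mem_nhdsGT_of_mem (show (0:ℝ) ∈ Set.Ico (0:ℝ) (b / q) from ⟨le_rfl, by positivity⟩)]
        with ε hε
      obtain ⟨hε, hεb⟩ := hε
      have hr : (1:ℝ) < b / (q * ε) := by
        rw [lt_div_iff₀ hq0] at hεb
        rw [one_lt_div (by positivity)]
        linarith [mul_comm ε q]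
      have hT : (0:ℝ) < ∑ i ∈ Finset.range (N + 1), (b / (q * ε)) ^ i :=
        Finset.sum_pos (fun i _ => by positivity) ⟨0, by simp⟩
      have hTle : ∑ i ∈ Finset.range (N + 1), (b / (q * ε)) ^ i
          ≤ ((N : ℝ) + 1) * (b / (q * ε)) ^ N := by
        calc ∑ i ∈ Finset.range (N + 1), (b / (q * ε)) ^ i
            ≤ ∑ _i ∈ Finset.range (N + 1), (b / (q * ε)) ^ N :=
              Finset.sum_le_sum (fun i hi => pow_le_pow_right₀ hr.le
                (Nat.lt_succ_iff.mp (Finset.mem_range.mp hi)))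
          _ = ((N : ℝ) + 1) * (b / (q * ε)) ^ N := by
              rw [Finset.sum_const, Finset.card_range, nsmul_eq_mul]
              push_cast; ring
      have hlogle : Real.log (∑ i ∈ Finset.range (N + 1), (b / (q * ε)) ^ i)
          ≤ Real.log ((N : ℝ) + 1) + N * (Real.log b - Real.log q - Real.log ε) := by
        refine le_trans (Real.log_le_log hT hTle) ?_
        rw [Real.log_mul (by positivity) (by positivity), Real.log_pow,
          Real.log_div hb.ne' (by positivity), Real.log_mul hq0.ne' hε.ne']
        ring_nf
        exact le_refl _
      calc ε ^ 2 * Real.log (∑ i ∈ Finset.range (N + 1), (b / (q * ε)) ^ i)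
          ≤ ε ^ 2 * (Real.log ((N : ℝ) + 1) + N * (Real.log b - Real.log q - Real.log ε)) :=
            mul_le_mul_of_nonneg_left hlogle (sq_nonneg ε)
        _ = ε ^ 2 * C - N * (Real.log ε * ε ^ 2) := by rw [hC_def]; ring
  have hlim : Tendsto (fun ε : ℝ => ε ^ 2 * Real.log (S ε)) (𝓝[>] 0)
      (𝓝 (-(b ^ 2 / (2 * q)))) := by
    have heq : ∀ᶠ ε in 𝓝[>] (0:ℝ), ε ^ 2 * Real.log (∑ i ∈ Finset.range (N + 1),
        (b / (q * ε)) ^ i) + (-(b ^ 2 / (2 * q))) = ε ^ 2 * Real.log (S ε) := by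
      filter_upwards [self_mem_nhdsWithin] with ε (hε : 0 < ε)
      have hT : (0:ℝ) < ∑ i ∈ Finset.range (N + 1), (b / (q * ε)) ^ i :=
        Finset.sum_pos (fun i _ => by positivity) ⟨0, by simp⟩
      have hSe : S ε = (∑ i ∈ Finset.range (N + 1), (b / (q * ε)) ^ i) *
          Real.exp (-(b ^ 2 / (2 * q * ε ^ 2))) := by
        simp only [hS_def, ← Finset.sum_mul]
      rw [hSe, Real.log_mul hT.ne' (Real.exp_pos _).ne', Real.log_exp, mul_add]
      have : ε ^ 2 * -(b ^ 2 / (2 * q * ε ^ 2)) = -(b ^ 2 / (2 * q)) := by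
        field_simp
      rw [this]
    refine Tendsto.congr' heq ?_
    simpa using hT0.add_const (-(b ^ 2 / (2 * q)))
  refine le_trans (limsup_le_limsup (Filter.eventually_of_mem self_mem_nhdsWithin
    (fun ε hε => key ε hε))) ?_
  have : Tendsto (fun ε : ℝ => ((ε ^ 2 * Real.log (S ε) : ℝ) : EReal)) (𝓝[>] 0)
      (𝓝 ((-(b ^ 2 / (2 * q)) : ℝ) : EReal)) := EReal.tendsto_coe.mpr hlim
  exact le_of_eq this.limsup_eq
end

section
/- Let Σ = Q Qᵀ be the covariance matrix of a non-degenerate centered Gaussian measure ν on ℝⁿ, with Q invertible, and μ the standard Gaussian measure on ℝⁿ. Then for every subset A ⊆ ℝⁿ, Cap^ν_{q,N}(A) = Cap^μ_{q,N}(Q⁻¹ A), i.e., the (q,N)-capacities for ν and μ are related by the linear change of variables x ↦ Qx. -/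
open MeasureTheory ProbabilityTheory
open scoped ENNReal NNReal

/-- The standard Gaussian measure on `ℝⁿ` (with the Euclidean norm). -/
noncomputable def stdGaussianE' (n : ℕ) : Measure (EuclideanSpace ℝ (Fin n)) :=
  Measure.map (MeasurableEquiv.toLp 2 (Fin n → ℝ))
    (Measure.pi fun _ : Fin n => gaussianReal 0 1)

/-- The `(q,N)`-Sobolev capacity of an open set for the Gaussian measure `μ`
whose Cameron–Martin space is `ℝⁿ` with inner product `⟨h₁,h₂⟩ = h₁ᵀΣ⁻¹h₂`,
`Σ = QQᵀ`: the Malliavin derivatives are Fréchet derivatives composed with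
`Q` in each slot. -/
noncomputable def gaussCapQOpen {n : ℕ} (μ : Measure (EuclideanSpace ℝ (Fin n)))
    (Q : EuclideanSpace ℝ (Fin n) →L[ℝ] EuclideanSpace ℝ (Fin n))
    (q : ℝ) (N : ℕ) (O : Set (EuclideanSpace ℝ (Fin n))) : ℝ≥0∞ :=
  ⨅ u ∈ {u : EuclideanSpace ℝ (Fin n) → ℝ | ContDiff ℝ (⊤ : ℕ∞) u ∧
      (∀ x ∈ O, 1 ≤ u x) ∧ (∀ᵐ x ∂μ, 0 ≤ u x)},
    ENNReal.ofReal (∑ i ∈ Finset.range (N + 1),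
      (∫ x, ‖(iteratedFDeriv ℝ i u x).compContinuousLinearMap (fun _ => Q)‖ ^ q ∂μ)
        ^ (1 / q))

/-- The `(q,N)`-capacity of an arbitrary set, as the infimum of capacities of
open supersets. -/
noncomputable def gaussCapQ {n : ℕ} (μ : Measure (EuclideanSpace ℝ (Fin n)))
    (Q : EuclideanSpace ℝ (Fin n) →L[ℝ] EuclideanSpace ℝ (Fin n))
    (q : ℝ) (N : ℕ) (A : Set (EuclideanSpace ℝ (Fin n))) : ℝ≥0∞ :=
  ⨅ O ∈ {O : Set (EuclideanSpace ℝ (Fin n)) | IsOpen O ∧ A ⊆ O},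
    gaussCapQOpen μ Q q N O

section Aux

variable {n : ℕ}

local notation "E" => EuclideanSpace ℝ (Fin n)

/-- Change of variables for a single integral in the capacity functional. -/
lemma cap_integral_change (μ : Measure E) (q : ℝ) (hq : 0 < q)
    (Q : E ≃L[ℝ] E) (i : ℕ) (u : E → ℝ) (hu : ContDiff ℝ (⊤ : ℕ∞) u) :
    ∫ x, ‖(iteratedFDeriv ℝ i u x).compContinuousLinearMap
        (fun _ => (Q : E →L[ℝ] E))‖ ^ q ∂(Measure.map Q μ)
      = ∫ x, ‖(iteratedFDeriv ℝ i (u ∘ Q) x).compContinuousLinearMap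
        (fun _ => ContinuousLinearMap.id ℝ E)‖ ^ q ∂μ := by
  have hcomp : ∀ x, (iteratedFDeriv ℝ i (u ∘ Q) x).compContinuousLinearMap
      (fun _ => ContinuousLinearMap.id ℝ E)
      = (iteratedFDeriv ℝ i u (Q x)).compContinuousLinearMap
        (fun _ => (Q : E →L[ℝ] E)) := by
    intro x
    rw [← ContinuousLinearEquiv.coe_coe Q,
      ContinuousLinearMap.iteratedFDeriv_comp_right (Q : E →L[ℝ] E) hu x (by exact_mod_cast le_top)]
    ext m
    simp [ContinuousMultilinearMap.compContinuousLinearMap_apply]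
  have hg : Continuous fun x : E => ‖(iteratedFDeriv ℝ i u x).compContinuousLinearMap
      (fun _ => (Q : E →L[ℝ] E))‖ ^ q := by
    have h1 : Continuous fun x : E => (iteratedFDeriv ℝ i u x).compContinuousLinearMap
        (fun _ => (Q : E →L[ℝ] E)) :=
      (ContinuousMultilinearMap.compContinuousLinearMapL
        (fun _ : Fin i => (Q : E →L[ℝ] E))).continuous.comp
        (hu.continuous_iteratedFDeriv (by exact_mod_cast le_top))
    exact Continuous.rpow_const h1.norm (fun x => Or.inr hq.le)
  rw [integral_map Q.continuous.aemeasurable hg.aestronglyMeasurable]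
  exact (integral_congr_ae (Filter.Eventually.of_forall fun x => by rw [hcomp x])).symm

/-- The capacity functional value is preserved by composing with `Q`. -/
lemma cap_value_change (μ : Measure E) (q : ℝ) (hq : 0 < q) (N : ℕ)
    (Q : E ≃L[ℝ] E) (u : E → ℝ) (hu : ContDiff ℝ (⊤ : ℕ∞) u) :
    ENNReal.ofReal (∑ i ∈ Finset.range (N + 1),
      (∫ x, ‖(iteratedFDeriv ℝ i u x).compContinuousLinearMap
        (fun _ => (Q : E →L[ℝ] E))‖ ^ q ∂(Measure.map Q μ)) ^ (1 / q))
    = ENNReal.ofReal (∑ i ∈ Finset.range (N + 1),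
      (∫ x, ‖(iteratedFDeriv ℝ i (u ∘ Q) x).compContinuousLinearMap
        (fun _ => ContinuousLinearMap.id ℝ E)‖ ^ q ∂μ) ^ (1 / q)) := by
  congr 1
  refine Finset.sum_congr rfl fun i _ => ?_
  rw [cap_integral_change μ q hq Q i u hu]

lemma ae_nonneg_change (μ : Measure E) (Q : E ≃L[ℝ] E) (u : E → ℝ) (hu : Continuous u) :
    (∀ᵐ x ∂(Measure.map Q μ), 0 ≤ u x) ↔ ∀ᵐ x ∂μ, 0 ≤ u (Q x) := by
  refine ae_map_iff Q.continuous.aemeasurable ?_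
  exact measurableSet_le measurable_const hu.measurable

lemma capOpen_change (μ : Measure E) (q : ℝ) (hq : 0 < q) (N : ℕ)
    (Q : E ≃L[ℝ] E) (O : Set E) :
    gaussCapQOpen (Measure.map Q μ) (Q : E →L[ℝ] E) q N O
      = gaussCapQOpen μ (ContinuousLinearMap.id ℝ E) q N (⇑Q ⁻¹' O) := by
  unfold gaussCapQOpen
  apply le_antisymm
  · refine le_iInf₂ fun u hu => ?_
    obtain ⟨h1, h2, h3⟩ := hu
    have h1' : ContDiff ℝ (⊤ : ℕ∞) (u ∘ ⇑Q.symm) := h1.comp Q.symm.contDiff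
    refine iInf₂_le_of_le (u ∘ ⇑Q.symm) ⟨h1', ?_, ?_⟩ ?_
    · intro x hx
      exact h2 (Q.symm x) (by simpa using hx)
    · rw [ae_nonneg_change μ Q _ (h1.continuous.comp Q.symm.continuous)]
      filter_upwards [h3] with x hx
      simpa using hx
    · rw [cap_value_change μ q hq N Q _ h1']
      have : (u ∘ ⇑Q.symm) ∘ ⇑Q = u := by
        funext x; simp
      rw [this]
  · refine le_iInf₂ fun u hu => ?_
    obtain ⟨h1, h2, h3⟩ := hu
    refine iInf₂_le_of_le (u ∘ ⇑Q) ⟨h1.comp Q.contDiff, fun x hx => h2 (Q x) hx, ?_⟩ ?_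
    · rw [ae_nonneg_change μ Q u h1.continuous] at h3
      exact h3
    · rw [cap_value_change μ q hq N Q u h1]

end Aux

/-- Change of variables for Gaussian capacities: if `ν` is the non-degenerate
centered Gaussian measure with covariance `Σ = QQᵀ` (`Q` invertible), i.e. the
image of the standard Gaussian `μ` under `Q`, then for every subset `A` of
`ℝⁿ`, `Cap^ν_{q,N}(A) = Cap^μ_{q,N}(Q⁻¹A)`. -/
theorem gaussian_capacity_change_of_variables (n : ℕ) (q : ℝ) (N : ℕ) (hq : 1 < q)
    (Q : EuclideanSpace ℝ (Fin n) ≃L[ℝ] EuclideanSpace ℝ (Fin n)) :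
    ∀ A : Set (EuclideanSpace ℝ (Fin n)),
      gaussCapQ (Measure.map Q (stdGaussianE' n)) (Q : EuclideanSpace ℝ (Fin n) →L[ℝ]
          EuclideanSpace ℝ (Fin n)) q N A
        = gaussCapQ (stdGaussianE' n)
            (ContinuousLinearMap.id ℝ (EuclideanSpace ℝ (Fin n))) q N (⇑Q ⁻¹' A) := by
  intro A
  have hq0 : 0 < q := lt_trans one_pos hq
  unfold gaussCapQ
  apply le_antisymm
  · refine le_iInf₂ fun O hO => ?_
    refine iInf₂_le_of_le (⇑Q '' O) ⟨Q.isOpenMap _ hO.1, ?_⟩ ?_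
    · intro x hx
      exact ⟨Q.symm x, hO.2 (show Q.symm x ∈ ⇑Q ⁻¹' A by simp [Set.mem_preimage, hx]), by simp⟩
    · rw [capOpen_change (stdGaussianE' n) q hq0 N Q]
      have h : ⇑Q ⁻¹' (⇑Q '' O) = O := Q.toEquiv.preimage_image O
      rw [h]
  · refine le_iInf₂ fun O hO => ?_
    refine iInf₂_le_of_le (⇑Q ⁻¹' O) ⟨hO.1.preimage Q.continuous, fun x hx => hO.2 hx⟩ ?_
    rw [capOpen_change (stdGaussianE' n) q hq0 N Q]
end

section
/- Let {T^{ε,m}} and {T^ε} be families of maps from W to a metric space (X,d), with {T^{ε,m}} exponentially good approximations of {T^ε} under a monotone subadditive set function Cap, and suppose each {T^{ε,m}} satisfies the Cap-LDP with good rate function I_m. Then for every x ∈ X, −(1/q)·sup_{λ>0} liminf_{m→∞} inf_{y∈B(x,λ)} I_m(y) = inf_{λ>0} limsup_{ε→0} ε² log Cap{w : T^ε(w) ∈ B(x,λ)} = inf_{λ>0} liminf_{ε→0} ε² log Cap{w : T^ε(w) ∈ B(x,λ)}. -/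
open Filter Metric Set Topology
open scoped ENNReal NNReal

/-!
By subadditivity, `ε² log Cap` of a union is at most the larger of the two pieces up to the
error `ε² log 2 → 0`. Splitting `{T^ε ∈ B(x,r)}` according to whether `d(T^{ε,m}, T^ε) > δ`,
the ball rates of `T^ε` are squeezed between the LDP bounds for `T^{ε,m}` on slightly smaller and
larger balls, up to an error that tends to `-∞` as `m → ∞`. Finally `a ↦ -a/q` is continuous
and antitone, so it turns `sup_λ liminf_m` into `inf_λ limsup_m`.
-/

section LimitLemmas

variable {α β : Type*} [CompleteLinearOrder β] {l : Filter α}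

theorem liminf_sup_le_sup_limsup [DenselyOrdered β] (u v : α → β) :
    liminf (fun x => u x ⊔ v x) l ≤ liminf u l ⊔ limsup v l := by
  by_contra! h
  obtain ⟨b, hb, hbL⟩ := exists_between h
  have hu : ∃ᶠ x in l, u x < b :=
    frequently_lt_of_liminf_lt (by isBoundedDefault) (le_sup_left.trans_lt hb)
  have hv : ∀ᶠ x in l, v x < b := eventually_lt_of_limsup_lt (le_sup_right.trans_lt hb)
  refine hbL.not_ge (liminf_le_of_frequently_le' ?_)
  exact (hu.and_eventually hv).mono fun x hx => sup_le hx.1.le hx.2.le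

variable [TopologicalSpace β] [OrderTopology β] [l.NeBot] {u v : α → β} {a : β}

theorem le_limsup_of_le_sup_of_tendsto_bot (h : ∀ᶠ x in l, a ≤ u x ⊔ v x)
    (hv : Tendsto v l (𝓝 ⊥)) : a ≤ limsup u l :=
  calc a = limsup (fun _ => a) l := limsup_const a |>.symm
    _ ≤ limsup (fun x => u x ⊔ v x) l := limsup_le_limsup h
    _ = limsup u l := by rw [limsup_max, hv.limsup_eq, sup_bot_eq]

theorem limsup_le_of_le_sup_of_tendsto_bot (h : ∀ᶠ x in l, u x ≤ a ⊔ v x)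
    (hv : Tendsto v l (𝓝 ⊥)) : limsup u l ≤ a :=
  calc limsup u l ≤ limsup (fun x => a ⊔ v x) l := limsup_le_limsup h
    _ = a := by rw [limsup_max, limsup_const, hv.limsup_eq, sup_bot_eq]

end LimitLemmas

theorem Antitone.map_biSup_liminf_of_continuous {ι κ β γ : Type*}
    [CompleteLinearOrder β] [TopologicalSpace β] [OrderTopology β]
    [CompleteLinearOrder γ] [TopologicalSpace γ] [OrderTopology γ]
    {f : β → γ} (hf : Antitone f) (hfc : Continuous f) {s : Set ι} (hs : s.Nonempty)
    (u : ι → κ → β) (l : Filter κ) [l.NeBot] :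
    f (⨆ i ∈ s, liminf (u i) l) = ⨅ i ∈ s, limsup (f ∘ u i) l := by
  have := hs.to_subtype
  rw [iSup_subtype', iInf_subtype', hf.map_ciSup_of_continuousAt hfc.continuousAt]
  exact iInf_congr fun i => hf.map_liminf_of_continuousAt _ hfc.continuousAt

theorem EReal.continuous_coe_mul {c : ℝ} (hc : c ≠ 0) :
    Continuous fun y : EReal => (c : EReal) * y := by
  refine continuous_iff_continuousAt.2 fun y => ?_
  have hmul := EReal.continuousAt_mul (p := ((c : EReal), y)) (.inl (by simpa using hc))
    (.inl (by simpa using hc)) (.inl (EReal.coe_ne_bot c)) (.inl (EReal.coe_ne_top c))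
  exact hmul.comp (continuous_const.prodMk continuous_id).continuousAt

theorem antitone_neg_coe_mul_coe_ennreal {c : ℝ} (hc : 0 ≤ c) :
    Antitone fun a : ℝ≥0∞ => -((c : EReal) * a) := fun _ _ hab =>
  EReal.neg_le_neg_iff.2 (mul_le_mul_of_nonneg_left (EReal.coe_ennreal_le_coe_ennreal_iff.2 hab)
    (EReal.coe_nonneg.2 hc))

theorem continuous_neg_coe_mul_coe_ennreal {c : ℝ} (hc : c ≠ 0) :
    Continuous fun a : ℝ≥0∞ => -((c : EReal) * a) :=
  continuous_neg.comp ((EReal.continuous_coe_mul hc).comp continuous_coe_ennreal_ereal)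

theorem ENNReal.log_le_log_two_add_max {a b c : ℝ≥0∞} (h : a ≤ b + c) :
    ENNReal.log a ≤ ((Real.log 2 : ℝ) : EReal) + max (ENNReal.log b) (ENNReal.log c) := by
  have hlog2 : ENNReal.log 2 = ((Real.log 2 : ℝ) : EReal) := by
    simpa using ENNReal.log_ofReal_of_pos (x := 2) (by norm_num)
  calc ENNReal.log a ≤ ENNReal.log (2 * max b c) :=
        ENNReal.log_monotone (h.trans (two_mul (max b c) ▸ add_le_add le_sup_left le_sup_right))
    _ = _ := by rw [ENNReal.log_mul_add, ENNReal.log_monotone.map_max, hlog2]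

theorem mem_closedBall_add_of_dist_le {X : Type*} [PseudoMetricSpace X] {x y z : X} {r δ : ℝ}
    (hy : y ∈ ball x r) (hz : dist z y ≤ δ) : z ∈ closedBall x (r + δ) := by
  rw [mem_closedBall]
  linarith [dist_triangle z y x, mem_ball.1 hy]

theorem limsup_sq_mul_log_two {l : Filter ℝ} [l.NeBot] (hl : l ≤ 𝓝 0) :
    limsup (fun ε : ℝ => ((ε ^ 2 * Real.log 2 : ℝ) : EReal)) l = 0 := by
  have hcont : Continuous fun ε : ℝ => ((ε ^ 2 * Real.log 2 : ℝ) : EReal) :=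
    continuous_coe_real_ereal.comp (by fun_prop)
  simpa using ((hcont.tendsto 0).mono_left hl).limsup_eq

namespace CapacityLDP

variable {W : Type*} {Cap : Set W → ℝ≥0∞}

variable (Cap) in
noncomputable def scaledLogCap (S : ℝ → Set W) (ε : ℝ) : EReal :=
  ((ε ^ 2 : ℝ) : EReal) * ENNReal.log (Cap (S ε))

section Subadditive

variable {S S₁ S₂ : ℝ → Set W}

theorem scaledLogCap_le_sq_mul_log_two_add_max
    (h : ∀ ε, Cap (S ε) ≤ Cap (S₁ ε) + Cap (S₂ ε)) (ε : ℝ) :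
    scaledLogCap Cap S ε ≤ ((ε ^ 2 * Real.log 2 : ℝ) : EReal) +
      max (scaledLogCap Cap S₁ ε) (scaledLogCap Cap S₂ ε) := by
  have hε : (0 : EReal) ≤ ((ε ^ 2 : ℝ) : EReal) := EReal.coe_nonneg.2 (sq_nonneg ε)
  calc scaledLogCap Cap S ε
      ≤ ((ε ^ 2 : ℝ) : EReal) *
          (((Real.log 2 : ℝ) : EReal) +
            max (ENNReal.log (Cap (S₁ ε))) (ENNReal.log (Cap (S₂ ε)))) :=
        mul_le_mul_of_nonneg_left (ENNReal.log_le_log_two_add_max (h ε)) hε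
    _ = _ := by
        rw [EReal.left_distrib_of_nonneg_of_ne_top hε (EReal.coe_ne_top _),
          (monotone_mul_left_of_nonneg hε).map_max, ← EReal.coe_mul]
        rfl

variable {l : Filter ℝ} [l.NeBot]

theorem limsup_scaledLogCap_le_max (h : ∀ ε, Cap (S ε) ≤ Cap (S₁ ε) + Cap (S₂ ε))
    (hl : l ≤ 𝓝 0) :
    limsup (scaledLogCap Cap S) l ≤
      max (limsup (scaledLogCap Cap S₁) l) (limsup (scaledLogCap Cap S₂) l) := by
  have h0 := limsup_sq_mul_log_two hl
  calc limsup (scaledLogCap Cap S) l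
      ≤ limsup (fun ε => ((ε ^ 2 * Real.log 2 : ℝ) : EReal) +
          max (scaledLogCap Cap S₁ ε) (scaledLogCap Cap S₂ ε)) l :=
        limsup_le_limsup (.of_forall (scaledLogCap_le_sq_mul_log_two_add_max h))
    _ ≤ 0 + limsup (fun ε => max (scaledLogCap Cap S₁ ε) (scaledLogCap Cap S₂ ε)) l :=
        h0 ▸ EReal.limsup_add_le (.inl (h0 ▸ EReal.zero_ne_bot))
          (.inl (h0 ▸ EReal.zero_ne_top))
    _ = _ := by rw [zero_add, limsup_max]

theorem liminf_scaledLogCap_le_max (h : ∀ ε, Cap (S ε) ≤ Cap (S₁ ε) + Cap (S₂ ε))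
    (hl : l ≤ 𝓝 0) :
    liminf (scaledLogCap Cap S) l ≤
      max (liminf (scaledLogCap Cap S₁) l) (limsup (scaledLogCap Cap S₂) l) := by
  have h0 := limsup_sq_mul_log_two hl
  calc liminf (scaledLogCap Cap S) l
      ≤ liminf (fun ε => ((ε ^ 2 * Real.log 2 : ℝ) : EReal) +
          max (scaledLogCap Cap S₁ ε) (scaledLogCap Cap S₂ ε)) l :=
        liminf_le_liminf (.of_forall (scaledLogCap_le_sq_mul_log_two_add_max h))
    _ ≤ 0 + liminf (fun ε => max (scaledLogCap Cap S₁ ε) (scaledLogCap Cap S₂ ε)) l :=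
        h0 ▸ EReal.liminf_add_le (.inl (h0 ▸ EReal.zero_ne_bot))
          (.inl (h0 ▸ EReal.zero_ne_top))
    _ ≤ _ := by rw [zero_add]; exact liminf_sup_le_sup_limsup _ _

end Subadditive

section Approximation

variable {X : Type*} [PseudoMetricSpace X] {T Te : ℝ → W → X} {I : X → ℝ≥0∞} {c : ℝ}
  {l : Filter ℝ} [l.NeBot] {x : X} {r δ R : ℝ}

theorem limsup_ball_le_of_upper_bound (hmono : ∀ A B : Set W, A ⊆ B → Cap A ≤ Cap B)
    (hsub : ∀ A B : Set W, Cap (A ∪ B) ≤ Cap A + Cap B) (hc : 0 ≤ c) (hl : l ≤ 𝓝 0)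
    (hR : r + δ < R)
    (hupper : ∀ C : Set X, IsClosed C →
      limsup (scaledLogCap Cap fun ε => {w | T ε w ∈ C}) l ≤
        -((c : EReal) * ↑(⨅ y ∈ C, I y))) :
    limsup (scaledLogCap Cap fun ε => {w | Te ε w ∈ ball x r}) l ≤
      max (-((c : EReal) * ↑(⨅ y ∈ ball x R, I y)))
        (limsup (scaledLogCap Cap fun ε => {w | δ < dist (T ε w) (Te ε w)}) l) := by
  have hcover : ∀ ε, {w | Te ε w ∈ ball x r} ⊆
      {w | T ε w ∈ closedBall x (r + δ)} ∪ {w | δ < dist (T ε w) (Te ε w)} :=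
    fun ε w hw => (le_or_gt _ δ).imp (mem_closedBall_add_of_dist_le hw) id
  refine (limsup_scaledLogCap_le_max (fun ε => (hmono _ _ (hcover ε)).trans (hsub _ _)) hl).trans
    (max_le_max_right _ ((hupper _ isClosed_closedBall).trans ?_))
  exact antitone_neg_coe_mul_coe_ennreal hc (biInf_mono fun _ hy => closedBall_subset_ball hR hy)

theorem le_liminf_ball_of_lower_bound (hmono : ∀ A B : Set W, A ⊆ B → Cap A ≤ Cap B)
    (hsub : ∀ A B : Set W, Cap (A ∪ B) ≤ Cap A + Cap B) (hl : l ≤ 𝓝 0) (hR : r + δ < R)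
    (hlower : ∀ G : Set X, IsOpen G →
      -((c : EReal) * ↑(⨅ y ∈ G, I y)) ≤
        liminf (scaledLogCap Cap fun ε => {w | T ε w ∈ G}) l) :
    -((c : EReal) * ↑(⨅ y ∈ ball x r, I y)) ≤
      max (liminf (scaledLogCap Cap fun ε => {w | Te ε w ∈ ball x R}) l)
        (limsup (scaledLogCap Cap fun ε => {w | δ < dist (T ε w) (Te ε w)}) l) := by
  have hcover : ∀ ε, {w | T ε w ∈ ball x r} ⊆
      {w | Te ε w ∈ ball x R} ∪ {w | δ < dist (T ε w) (Te ε w)} := fun ε w hw =>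
    (le_or_gt _ δ).imp (fun hd => closedBall_subset_ball hR
      (mem_closedBall_add_of_dist_le hw (dist_comm (T ε w) _ ▸ hd))) id
  exact (hlower _ isOpen_ball).trans
    (liminf_scaledLogCap_le_max (fun ε => (hmono _ _ (hcover ε)).trans (hsub _ _)) hl)

end Approximation

end CapacityLDP

open CapacityLDP

theorem capacity_ldp_ball_identity_general {W X : Type*} [MetricSpace X]
    (Cap : Set W → ℝ≥0∞)
    (hmono : ∀ A B : Set W, A ⊆ B → Cap A ≤ Cap B)
    (hsub : ∀ A B : Set W, Cap (A ∪ B) ≤ Cap A + Cap B)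
    (q : ℝ) (hq : 1 < q)
    (T : ℝ → ℕ → W → X) (Te : ℝ → W → X)
    (Im : ℕ → X → ℝ≥0∞)
    (hupper : ∀ m : ℕ, ∀ C : Set X, IsClosed C →
      limsup (fun ε : ℝ => ((ε ^ 2 : ℝ) : EReal) *
          ENNReal.log (Cap {w | T ε m w ∈ C})) (𝓝[>] 0)
        ≤ -(((1 / q : ℝ) : EReal) * ((⨅ y ∈ C, Im m y : ℝ≥0∞) : EReal)))
    (hlower : ∀ m : ℕ, ∀ G : Set X, IsOpen G →
      -(((1 / q : ℝ) : EReal) * ((⨅ y ∈ G, Im m y : ℝ≥0∞) : EReal))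
        ≤ liminf (fun ε : ℝ => ((ε ^ 2 : ℝ) : EReal) *
            ENNReal.log (Cap {w | T ε m w ∈ G})) (𝓝[>] 0))
    (happrox : ∀ lam : ℝ, 0 < lam →
      Tendsto (fun m : ℕ => limsup (fun ε : ℝ => ((ε ^ 2 : ℝ) : EReal) *
          ENNReal.log (Cap {w | lam < dist (T ε m w) (Te ε w)})) (𝓝[>] 0))
        atTop (𝓝 (⊥ : EReal))) :
    ∀ x : X,
      (-(((1 / q : ℝ) : EReal) *
          ((⨆ lam ∈ Set.Ioi (0 : ℝ),
            liminf (fun m : ℕ => ⨅ y ∈ ball x lam, Im m y) atTop : ℝ≥0∞) : EReal))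
        = ⨅ lam ∈ Set.Ioi (0 : ℝ),
            limsup (fun ε : ℝ => ((ε ^ 2 : ℝ) : EReal) *
              ENNReal.log (Cap {w | Te ε w ∈ ball x lam})) (𝓝[>] 0)) ∧
      (-(((1 / q : ℝ) : EReal) *
          ((⨆ lam ∈ Set.Ioi (0 : ℝ),
            liminf (fun m : ℕ => ⨅ y ∈ ball x lam, Im m y) atTop : ℝ≥0∞) : EReal))
        = ⨅ lam ∈ Set.Ioi (0 : ℝ),
            liminf (fun ε : ℝ => ((ε ^ 2 : ℝ) : EReal) *
              ENNReal.log (Cap {w | Te ε w ∈ ball x lam})) (𝓝[>] 0)) := by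
  intro x
  have hc : 0 < 1 / q := one_div_pos.2 (zero_lt_one.trans hq)
  have hl : 𝓝[>] (0 : ℝ) ≤ 𝓝 0 := nhdsWithin_le_nhds
  set J := fun m lam => ⨅ y ∈ ball x lam, Im m y
  set V := -(((1 / q : ℝ) : EReal) *
    ((⨆ lam ∈ Ioi (0 : ℝ), liminf (J · lam) atTop : ℝ≥0∞) : EReal))
  set B := fun lam ε => {w | Te ε w ∈ ball x lam}
  set U := ⨅ lam ∈ Ioi (0 : ℝ), limsup (scaledLogCap Cap (B lam)) (𝓝[>] 0)
  set L := ⨅ lam ∈ Ioi (0 : ℝ), liminf (scaledLogCap Cap (B lam)) (𝓝[>] 0)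
  have hV : V = ⨅ lam ∈ Ioi (0 : ℝ),
      limsup (fun m => -(((1 / q : ℝ) : EReal) * J m lam)) atTop :=
    (antitone_neg_coe_mul_coe_ennreal hc.le).map_biSup_liminf_of_continuous
      (continuous_neg_coe_mul_coe_ennreal hc.ne') nonempty_Ioi _ atTop
  have hVL : V ≤ L := le_iInf₂ fun lam hlam => by
    have h3 : 0 < lam / 3 := by linarith [mem_Ioi.1 hlam]
    refine hV ▸ (iInf₂_le (lam / 3) h3).trans (limsup_le_of_le_sup_of_tendsto_bot
      (.of_forall fun m => ?_) (happrox _ h3))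
    exact le_liminf_ball_of_lower_bound hmono hsub hl (by linarith) (hlower m)
  have hUV : U ≤ V := hV ▸ le_iInf₂ fun lam hlam => by
    have h3 : 0 < lam / 3 := by linarith [mem_Ioi.1 hlam]
    refine (iInf₂_le (lam / 3) h3).trans (le_limsup_of_le_sup_of_tendsto_bot
      (.of_forall fun m => ?_) (happrox _ h3))
    exact limsup_ball_le_of_upper_bound hmono hsub hc.le hl (by linarith) (hupper m)
  have hLU : L ≤ U := iInf₂_mono fun _ _ => liminf_le_limsup
  exact ⟨le_antisymm (hVL.trans hLU) hUV, le_antisymm hVL (hLU.trans hUV)⟩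

/-- Key ball identity for exponentially good approximations under a capacity:
if each `{T^{ε,m}}` satisfies the `Cap`-LDP with good rate function `Im m` and
the `{T^{ε,m}}` are exponentially good approximations of `{Tε}`, then for
every `x`, `−(1/q)·sup_{λ>0} liminf_m inf_{B(x,λ)} Im m` equals both
`inf_{λ>0} limsup_{ε→0} ε² log Cap{Tε ∈ B(x,λ)}` and
`inf_{λ>0} liminf_{ε→0} ε² log Cap{Tε ∈ B(x,λ)}`. -/
theorem capacity_ldp_ball_identity {W X : Type*} [MetricSpace X]
    (Cap : Set W → ℝ≥0∞)
    (hmono : ∀ A B : Set W, A ⊆ B → Cap A ≤ Cap B)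
    (hsub : ∀ A B : Set W, Cap (A ∪ B) ≤ Cap A + Cap B)
    (q : ℝ) (hq : 1 < q)
    (T : ℝ → ℕ → W → X) (Te : ℝ → W → X)
    (Im : ℕ → X → ℝ≥0∞)
    (hImlsc : ∀ m, LowerSemicontinuous (Im m))
    (hImcomp : ∀ m, ∀ α : ℝ≥0, IsCompact {y : X | Im m y ≤ (α : ℝ≥0∞)})
    (hupper : ∀ m : ℕ, ∀ C : Set X, IsClosed C →
      limsup (fun ε : ℝ => ((ε ^ 2 : ℝ) : EReal) *
          ENNReal.log (Cap {w | T ε m w ∈ C})) (𝓝[>] 0)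
        ≤ -(((1 / q : ℝ) : EReal) * ((⨅ y ∈ C, Im m y : ℝ≥0∞) : EReal)))
    (hlower : ∀ m : ℕ, ∀ G : Set X, IsOpen G →
      -(((1 / q : ℝ) : EReal) * ((⨅ y ∈ G, Im m y : ℝ≥0∞) : EReal))
        ≤ liminf (fun ε : ℝ => ((ε ^ 2 : ℝ) : EReal) *
            ENNReal.log (Cap {w | T ε m w ∈ G})) (𝓝[>] 0))
    (happrox : ∀ lam : ℝ, 0 < lam →
      Tendsto (fun m : ℕ => limsup (fun ε : ℝ => ((ε ^ 2 : ℝ) : EReal) *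
          ENNReal.log (Cap {w | lam < dist (T ε m w) (Te ε w)})) (𝓝[>] 0))
        atTop (𝓝 (⊥ : EReal))) :
    ∀ x : X,
      (-(((1 / q : ℝ) : EReal) *
          ((⨆ lam ∈ Set.Ioi (0 : ℝ),
            liminf (fun m : ℕ => ⨅ y ∈ ball x lam, Im m y) atTop : ℝ≥0∞) : EReal))
        = ⨅ lam ∈ Set.Ioi (0 : ℝ),
            limsup (fun ε : ℝ => ((ε ^ 2 : ℝ) : EReal) *
              ENNReal.log (Cap {w | Te ε w ∈ ball x lam})) (𝓝[>] 0)) ∧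
      (-(((1 / q : ℝ) : EReal) *
          ((⨆ lam ∈ Set.Ioi (0 : ℝ),
            liminf (fun m : ℕ => ⨅ y ∈ ball x lam, Im m y) atTop : ℝ≥0∞) : EReal))
        = ⨅ lam ∈ Set.Ioi (0 : ℝ),
            liminf (fun ε : ℝ => ((ε ^ 2 : ℝ) : EReal) *
              ENNReal.log (Cap {w | Te ε w ∈ ball x lam})) (𝓝[>] 0)) :=
  capacity_ldp_ball_identity_general Cap hmono hsub q hq T Te Im hupper hlower happrox
end

section
/- Let w be a continuous path of bounded variation in ℝ^d on [0,1] and define its level-k iterated integrals w^k_{s,t} = ∫_{s<t₁<⋯<t_k<t} dw_{t₁} ⊗ ⋯ ⊗ dw_{t_k}. Then Chen's identity holds: for all 0 ≤ s ≤ u ≤ t ≤ 1 and all n, the truncated signature 𝐰_{s,t} = (1, w¹_{s,t}, …, wⁿ_{s,t}) satisfies 𝐰_{s,u} ⊗ 𝐰_{s,u}' = 𝐰_{s,t}, i.e., w^k_{s,t} = ∑_{j=0}^k w^j_{s,u} ⊗ w^{k−j}_{u,t} for each 1 ≤ k ≤ n (with w⁰ = 1). -/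
/-!
Induction on the level. Split `∫_s^t = ∫_s^u + ∫_u^t` in the recursive definition of
`w^{k+1}_{s,t}`: the first piece is `w^{k+1}_{s,u}`, and in the second one expanding the
integrand `w^k_{s,r}` by the induction hypothesis and integrating termwise turns each
`w^j_{s,u} ⊗ w^{k-j}_{u,r}` into `w^j_{s,u} ⊗ w^{k-j+1}_{u,t}`.
-/

open MeasureTheory

/-- The coordinates of the level-`k` iterated integral
`w^k_{s,t} = ∫_{s<t₁<⋯<t_k<t} dw_{t₁} ⊗ ⋯ ⊗ dw_{t_k}` of a smooth path
`w : ℝ → ℝ^d`: the coordinate of `w^k_{s,t}` at a multi-index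
`idx : Fin k → Fin d` is defined recursively by
`w^{k+1}_{s,t}(idx) = ∫_s^t w^k_{s,u}(idx|_{first k}) dw^{idx(k+1)}_u`. -/
noncomputable def sigCoord {d : ℕ} (w : ℝ → Fin d → ℝ) :
    (k : ℕ) → ℝ → ℝ → (Fin k → Fin d) → ℝ
  | 0, _, _, _ => 1
  | (k + 1), s, t, idx =>
      ∫ u in s..t, sigCoord w k s u (fun a => idx a.castSucc) *
        deriv (fun r => w r (idx (Fin.last k))) u

section

variable {d : ℕ} (w : ℝ → Fin d → ℝ)

theorem sigCoord_succ_val (k : ℕ) (s t : ℝ) (idx : ℕ → Fin d) :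
    sigCoord w (k + 1) s t (fun a => idx a) =
      ∫ r in s..t, sigCoord w k s r (fun a => idx a) * deriv (fun r => w r (idx k)) r :=
  rfl

variable {w}

theorem continuous_deriv_coord (hw : ContDiff ℝ 1 w) (i : Fin d) :
    Continuous (deriv fun r => w r i) :=
  (contDiff_pi.mp hw i).continuous_deriv le_rfl

theorem continuous_sigCoord (hw : ContDiff ℝ 1 w) (k : ℕ) (s : ℝ) (idx : Fin k → Fin d) :
    Continuous fun t => sigCoord w k s t idx := by
  induction k with
  | zero => exact continuous_const
  | succ k ih =>
    exact intervalIntegral.continuous_primitive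
      (fun a b => ((ih _).mul (continuous_deriv_coord hw _)).intervalIntegrable a b) s

-- Reading the word through `ℕ → Fin d` keeps every sub-word free of `Fin` casts.
theorem sigCoord_val_eq_sum_mul (hw : ContDiff ℝ 1 w) (s u : ℝ) (k : ℕ) (t : ℝ)
    (idx : ℕ → Fin d) :
    sigCoord w k s t (fun a => idx a) =
      ∑ j ∈ Finset.range (k + 1),
        sigCoord w j s u (fun a => idx a) * sigCoord w (k - j) u t (fun a => idx (j + a)) := by
  induction k generalizing t with
  | zero => simp [sigCoord]
  | succ k ih =>
    set D := deriv fun r => w r (idx k)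
    have hint : ∀ a b, IntervalIntegrable (fun r => sigCoord w k s r (fun a => idx a) * D r)
        volume a b := fun a b =>
      ((continuous_sigCoord hw k s _).mul (continuous_deriv_coord hw _)).intervalIntegrable a b
    have tail : ∫ r in u..t, sigCoord w k s r (fun a => idx a) * D r =
        ∑ j ∈ Finset.range (k + 1),
          sigCoord w j s u (fun a => idx a) *
            sigCoord w (k - j + 1) u t (fun a => idx (j + a)) := by
      have hcont : ∀ j, Continuous fun r =>
          sigCoord w j s u (fun a => idx a) *
            (sigCoord w (k - j) u r (fun a => idx (j + a)) * D r) :=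
        fun j => ((continuous_sigCoord hw _ u _).mul (continuous_deriv_coord hw _)).const_mul _
      simp_rw [ih, Finset.sum_mul, mul_assoc]
      rw [intervalIntegral.integral_finsetSum fun j _ => (hcont j).intervalIntegrable u t]
      refine Finset.sum_congr rfl fun j hj => ?_
      rw [intervalIntegral.integral_const_mul,
        sigCoord_succ_val w (k - j) u t (fun a => idx (j + a)),
        Nat.add_sub_cancel' (Finset.mem_range_succ_iff.mp hj)]
    rw [sigCoord_succ_val,
      ← intervalIntegral.integral_add_adjacent_intervals (hint s u) (hint u t), tail,
      Finset.sum_range_succ _ (k + 1), Nat.sub_self, add_comm]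
    congr 1
    · refine Finset.sum_congr rfl fun j hj => ?_
      rw [Nat.sub_add_comm (Finset.mem_range_succ_iff.mp hj)]
    · exact (mul_one _).symm

end

theorem chen_identity {d : ℕ} (w : ℝ → Fin d → ℝ) (hw : ContDiff ℝ 1 w)
    (s u t : ℝ) (k : ℕ) (idx : Fin k → Fin d) :
    sigCoord w k s t idx
      = ∑ j : Fin (k + 1),
          sigCoord w j s u (fun a => idx (Fin.castLE (Nat.lt_succ_iff.mp j.isLt) a)) *
          sigCoord w (k - j) u t
            (fun a => idx ⟨(j : ℕ) + (a : ℕ), by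
              have h1 := a.isLt; have h2 := j.isLt; omega⟩) := by
  cases k with
  | zero => simp [sigCoord]
  | succ k =>
    have chen := sigCoord_val_eq_sum_mul hw s u (k + 1) t fun m => idx (Fin.ofNat (k + 1) m)
    simp only [Fin.ofNat_val_eq_self] at chen
    rw [chen, Finset.sum_range]
    refine Finset.sum_congr rfl fun j _ => ?_
    congr 2 <;> funext a <;> congr 1 <;> refine Fin.ext (Nat.mod_eq_of_lt ?_) <;>
      have := a.isLt <;> omega
end
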